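/- arXiv:1712.02688 — 3 statements merged into one kernel-verified Lean document; each statement's English description precedes it below -/
import Mathlib

section
/- A unimodal map g : [0,1] → [0,1] is topologically conjugated to the tent map f if and only if the complete pre-image of 0 under g is dense in [0,1]. -/
open Set

/-- The tent map: `f(x) = 2x` for `x ≤ 1/2` and `f(x) = 2 - 2x` for `x ≥ 1/2`. -/
noncomputable def tent (x : ℝ) : ℝ := min (2 * x) (2 - 2 * x)

/-- A unimodal map of `[0,1]`. -/
def IsUnimodal (g : ℝ → ℝ) : Prop :=
  ContinuousOn g (Icc 0 1) ∧ MapsTo g (Icc 0 1) (Icc 0 1) ∧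
  ∃ v ∈ Ioo (0:ℝ) 1, StrictMonoOn g (Icc 0 v) ∧ StrictAntiOn g (Icc v 1) ∧
    g 0 = 0 ∧ g 1 = 0 ∧ g v = 1

/-- `g` is piecewise linear (affine) on `[a,b]`. -/
def IsPLOn (g : ℝ → ℝ) (a b : ℝ) : Prop :=
  ∃ (n : ℕ) (p : ℕ → ℝ), 0 < n ∧ p 0 = a ∧ p n = b ∧
    (∀ i < n, p i < p (i + 1)) ∧
    ∀ i < n, ∃ c d : ℝ, ∀ x ∈ Icc (p i) (p (i + 1)), g x = c * x + d

/-- A carcass map: a piecewise linear unimodal map. -/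
def IsCarcass (g : ℝ → ℝ) : Prop := IsUnimodal g ∧ IsPLOn g 0 1

/-- `g^{-n}(0)`, the set of points of `[0,1]` mapped to `0` by the `n`-th iterate. -/
def preimZero (g : ℝ → ℝ) (n : ℕ) : Set ℝ := {x ∈ Icc (0:ℝ) 1 | g^[n] x = 0}

/-- The complete pre-image of `0` under `g`. -/
def completePreimZero (g : ℝ → ℝ) : Set ℝ := ⋃ n ∈ {n : ℕ | 1 ≤ n}, preimZero g n

/-- A homeomorphism of `[0,1]` onto itself (a continuous bijection of the compact
interval `[0,1]`, whose inverse is then automatically continuous). -/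
def IsHomeoI (h : ℝ → ℝ) : Prop :=
  ContinuousOn h (Icc 0 1) ∧ BijOn h (Icc 0 1) (Icc 0 1)

/-- `h` is a topological conjugacy from the tent map to `g`, i.e. a homeomorphism of
`[0,1]` with `h 0 = 0` and `h ∘ f = g ∘ h`. -/
def ConjTent (g h : ℝ → ℝ) : Prop :=
  IsHomeoI h ∧ h 0 = 0 ∧ ∀ x ∈ Icc (0:ℝ) 1, h (tent x) = g (h x)

/-- A kink of a (piecewise linear) map: an interior point where it is not differentiable. -/
def IsKink (g : ℝ → ℝ) (x : ℝ) : Prop := x ∈ Ioo (0:ℝ) 1 ∧ ¬ DifferentiableAt ℝ g x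

/-- A firm carcass map: a carcass map all of whose kinks are in the complete
pre-image of `0`. -/
def IsFirm (g : ℝ → ℝ) : Prop := IsCarcass g ∧ ∀ x, IsKink g x → x ∈ completePreimZero g

/-- A self-semiconjugation of `g`: a continuous surjective map `ψ : [0,1] → [0,1]`
with `ψ ∘ g = g ∘ ψ`. -/
def IsSelfSemiconj (g ψ : ℝ → ℝ) : Prop :=
  ContinuousOn ψ (Icc 0 1) ∧ MapsTo ψ (Icc 0 1) (Icc 0 1) ∧ SurjOn ψ (Icc 0 1) (Icc 0 1) ∧
  ∀ x ∈ Icc (0:ℝ) 1, ψ (g x) = g (ψ x)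

/-- The map `ξ_t(x) = (1 - (-1)^⌊tx⌋)/2 + (-1)^⌊tx⌋ · {tx}`. -/
noncomputable def xi (t : ℕ) (x : ℝ) : ℝ :=
  (1 - (-1 : ℝ) ^ ⌊(t : ℝ) * x⌋) / 2 + (-1 : ℝ) ^ ⌊(t : ℝ) * x⌋ * Int.fract ((t : ℝ) * x)

/-- `μ` enumerates, for each `n ≥ 1`, the set `g^{-n}(0)` in increasing order as
`μ n 0 < μ n 1 < … < μ n 2^{n-1}`. -/
def IsMuSeq (g : ℝ → ℝ) (μ : ℕ → ℕ → ℝ) : Prop :=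
  ∀ n, 1 ≤ n →
    (∀ k < 2 ^ (n - 1), μ n k < μ n (k + 1)) ∧
    ∀ x, x ∈ preimZero g n ↔ ∃ k ≤ 2 ^ (n - 1), μ n k = x

/-!
Both directions compare the complete pre-images of `0`. A conjugacy `h` carries the pre-images
of `0` under the tent map, which are the dyadic rationals and hence dense, onto those under `g`,
so density passes to `g`.

Conversely, given two unimodal maps `f` and `g`, pulling an increasing bijection `φ` of
`[0,1]` back through the branches of `g⁻¹` produces a new one `φ'` with `g ∘ φ' = φ ∘ f`.
Starting from the identity, the `n`-th iterate of this construction carries `f^{-(n+1)}(0)`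
onto `g^{-(n+1)}(0)`, and these approximations agree where they overlap. Their common
restriction to the complete pre-image of `0` under `f` is strictly increasing, with image the
complete pre-image under `g`. When both pre-images are dense, its monotone extension to `[0,1]`
is a homeomorphism, and it conjugates `f` to `g` by continuity.
-/

open Function

section Topology

variable {α β : Type*} [LinearOrder α] [TopologicalSpace α] [OrderTopology α]
  [LinearOrder β] [TopologicalSpace β] [OrderTopology β]

theorem inter_Ioo_nonempty_of_Ioo_subset_closure [DenselyOrdered α] {s : Set α} {a b : α}
    (hs : Ioo a b ⊆ closure s) (hab : a < b) : (s ∩ Ioo a b).Nonempty :=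
  let ⟨c, hc⟩ := nonempty_Ioo.2 hab
  (closure_inter_open_nonempty_iff isOpen_Ioo).1 ⟨c, hs hc, hc⟩

theorem MonotoneOn.continuousOn_of_subset_closure_image [DenselyOrdered β] {f : α → β}
    {s : Set α} {t : Set β} [s.OrdConnected] [t.OrdConnected] (hf : MonotoneOn f s)
    (hmaps : MapsTo f s t) (ht : t ⊆ closure (f '' s)) : ContinuousOn f s := by
  have hdense : DenseRange hmaps.restrict := by
    rw [DenseRange, Subtype.dense_iff, ← range_comp]
    show t ⊆ closure (range (s.domRestrict f))
    rwa [range_domRestrict]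
  have hmono : Monotone hmaps.restrict := fun x y hxy => hf x.2 y.2 hxy
  rw [continuousOn_iff_continuous_domRestrict]
  exact continuous_subtype_val.comp (hmono.continuous_of_denseRange hdense)

end Topology

theorem StrictMonoOn.strictMonoOn_invFunOn {α β : Type*} [LinearOrder α] [Nonempty α]
    [Preorder β] {f : α → β} {s : Set α} {t : Set β} (hf : StrictMonoOn f s)
    (hst : SurjOn f s t) : StrictMonoOn (invFunOn f s) t := by
  intro y₁ hy₁ y₂ hy₂ hy
  rwa [← hf.lt_iff_lt (hst.mapsTo_invFunOn hy₁) (hst.mapsTo_invFunOn hy₂),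
    hst.rightInvOn_invFunOn hy₁, hst.rightInvOn_invFunOn hy₂]

theorem StrictAntiOn.strictAntiOn_invFunOn {α β : Type*} [LinearOrder α] [Nonempty α]
    [Preorder β] {f : α → β} {s : Set α} {t : Set β} (hf : StrictAntiOn f s)
    (hst : SurjOn f s t) : StrictAntiOn (invFunOn f s) t := by
  intro y₁ hy₁ y₂ hy₂ hy
  rwa [← hf.lt_iff_gt (hst.mapsTo_invFunOn hy₁) (hst.mapsTo_invFunOn hy₂),
    hst.rightInvOn_invFunOn hy₁, hst.rightInvOn_invFunOn hy₂]

theorem apply_iterate_of_semiconjOn {α β : Type*} {s : Set α} {f : α → α} {g : β → β}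
    {h : α → β} (hf : MapsTo f s s) (hconj : ∀ x ∈ s, h (f x) = g (h x)) (n : ℕ) {x : α}
    (hx : x ∈ s) : h (f^[n] x) = g^[n] (h x) := by
  induction n generalizing x with
  | zero => rfl
  | succ n ih => rw [iterate_succ_apply, iterate_succ_apply, ih (hf hx), hconj x hx]

section PreimZero

variable {g : ℝ → ℝ} {n m : ℕ} {x : ℝ}

theorem mem_completePreimZero : x ∈ completePreimZero g ↔ ∃ n, x ∈ preimZero g (n + 1) := by
  simp only [completePreimZero, mem_iUnion, exists_prop]
  constructor
  · rintro ⟨n, hn, hx⟩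
    exact ⟨n - 1, by rwa [Nat.sub_add_cancel hn]⟩
  · rintro ⟨n, hx⟩
    exact ⟨n + 1, Nat.le_add_left 1 n, hx⟩

theorem completePreimZero_subset_Icc : completePreimZero g ⊆ Icc 0 1 :=
  iUnion₂_subset fun _ _ => sep_subset _ _

theorem mem_preimZero_succ_iff (hg : MapsTo g (Icc 0 1) (Icc 0 1)) (hx : x ∈ Icc (0:ℝ) 1) :
    x ∈ preimZero g (n + 1) ↔ g x ∈ preimZero g n := by
  simp only [preimZero, mem_sep_iff, iterate_succ_apply, hx, hg hx, true_and]

theorem zero_mem_preimZero (h0 : g 0 = 0) (n : ℕ) : (0:ℝ) ∈ preimZero g n :=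
  ⟨left_mem_Icc.2 zero_le_one, iterate_fixed h0 n⟩

theorem one_mem_preimZero (h0 : g 0 = 0) (h1 : g 1 = 0) (n : ℕ) :
    (1:ℝ) ∈ preimZero g (n + 1) :=
  ⟨right_mem_Icc.2 zero_le_one, by rw [iterate_succ_apply, h1, iterate_fixed h0]⟩

theorem preimZero_mono (h0 : g 0 = 0) (hnm : n ≤ m) : preimZero g n ⊆ preimZero g m := by
  rintro x ⟨hx, hxn⟩
  obtain ⟨k, rfl⟩ := Nat.exists_eq_add_of_le' hnm
  exact ⟨hx, by rw [iterate_add_apply, hxn, iterate_fixed h0]⟩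

end PreimZero

structure IsUnimodalAt (g : ℝ → ℝ) (v : ℝ) : Prop where
  continuousOn : ContinuousOn g (Icc 0 1)
  mem_Ioo : v ∈ Ioo (0:ℝ) 1
  strictMonoOn : StrictMonoOn g (Icc 0 v)
  strictAntiOn : StrictAntiOn g (Icc v 1)
  map_zero : g 0 = 0
  map_one : g 1 = 0
  map_turn : g v = 1

theorem IsUnimodal.exists_isUnimodalAt {g : ℝ → ℝ} (hg : IsUnimodal g) :
    ∃ v, IsUnimodalAt g v :=
  let ⟨hc, _, v, hv, hmono, hanti, h0, h1, hv1⟩ := hg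
  ⟨v, hc, hv, hmono, hanti, h0, h1, hv1⟩

namespace IsUnimodalAt

variable {g : ℝ → ℝ} {v x : ℝ}

theorem bijOn_left (hg : IsUnimodalAt g v) : BijOn g (Icc 0 v) (Icc 0 1) := by
  have hmaps := hg.strictMonoOn.monotoneOn.mapsTo_Icc
  have hsurj := intermediate_value_Icc hg.mem_Ioo.1.le
    (hg.continuousOn.mono (Icc_subset_Icc_right hg.mem_Ioo.2.le))
  rw [hg.map_zero, hg.map_turn] at hmaps hsurj
  exact ⟨hmaps, hg.strictMonoOn.injOn, hsurj⟩

theorem bijOn_right (hg : IsUnimodalAt g v) : BijOn g (Icc v 1) (Icc 0 1) := by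
  have hmaps := hg.strictAntiOn.antitoneOn.mapsTo_Icc
  have hsurj := intermediate_value_Icc' hg.mem_Ioo.2.le
    (hg.continuousOn.mono (Icc_subset_Icc_left hg.mem_Ioo.1.le))
  rw [hg.map_one, hg.map_turn] at hmaps hsurj
  exact ⟨hmaps, hg.strictAntiOn.injOn, hsurj⟩

theorem mapsTo (hg : IsUnimodalAt g v) : MapsTo g (Icc 0 1) (Icc 0 1) := by
  intro x hx
  rcases le_total x v with hxv | hxv
  exacts [hg.bijOn_left.mapsTo ⟨hx.1, hxv⟩, hg.bijOn_right.mapsTo ⟨hxv, hx.2⟩]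

theorem eq_zero_iff (hg : IsUnimodalAt g v) (hx : x ∈ Icc (0:ℝ) 1) :
    g x = 0 ↔ x = 0 ∨ x = 1 := by
  refine ⟨fun h => ?_, by rintro (rfl | rfl); exacts [hg.map_zero, hg.map_one]⟩
  rcases le_total x v with hxv | hxv
  · exact .inl <| hg.strictMonoOn.injOn ⟨hx.1, hxv⟩ (left_mem_Icc.2 hg.mem_Ioo.1.le)
      (h.trans hg.map_zero.symm)
  · exact .inr <| hg.strictAntiOn.injOn ⟨hxv, hx.2⟩ (right_mem_Icc.2 hg.mem_Ioo.2.le)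
      (h.trans hg.map_one.symm)

theorem invFunOn_left_apply (hg : IsUnimodalAt g v) (hx : x ∈ Icc 0 v) :
    invFunOn g (Icc 0 v) (g x) = x :=
  hg.strictMonoOn.injOn.leftInvOn_invFunOn hx

theorem invFunOn_right_apply (hg : IsUnimodalAt g v) (hx : x ∈ Icc v 1) :
    invFunOn g (Icc v 1) (g x) = x :=
  hg.strictAntiOn.injOn.leftInvOn_invFunOn hx

end IsUnimodalAt

section Construction

variable (f : ℝ → ℝ) (u : ℝ) (g : ℝ → ℝ) (v : ℝ)

noncomputable def conjLift (φ : ℝ → ℝ) (x : ℝ) : ℝ :=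
  if x ≤ u then invFunOn g (Icc 0 v) (φ (f x)) else invFunOn g (Icc v 1) (φ (f x))

noncomputable def approxConj (n : ℕ) : ℝ → ℝ := (conjLift f u g v)^[n] id

/-- The monotone extension of the maps `approxConj n` restricted to `f^{-(n+1)}(0)`, which agree
where they overlap. -/
noncomputable def conjLimit (x : ℝ) : ℝ :=
  sSup {y | ∃ n, ∃ d ∈ preimZero f (n + 1), d ≤ x ∧ approxConj f u g v n d = y}

variable {f u g v} {φ ψ : ℝ → ℝ} {x : ℝ} {n : ℕ}

theorem conjLift_of_le (hx : x ≤ u) : conjLift f u g v φ x = invFunOn g (Icc 0 v) (φ (f x)) :=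
  if_pos hx

theorem conjLift_of_ge (hf : IsUnimodalAt f u) (hg : IsUnimodalAt g v) (h1 : φ 1 = 1)
    (hx : u ≤ x) : conjLift f u g v φ x = invFunOn g (Icc v 1) (φ (f x)) := by
  rcases hx.eq_or_lt with rfl | hx
  · have hL := hg.invFunOn_left_apply (right_mem_Icc.2 hg.mem_Ioo.1.le)
    have hR := hg.invFunOn_right_apply (left_mem_Icc.2 hg.mem_Ioo.2.le)
    rw [hg.map_turn] at hL hR
    rw [conjLift_of_le le_rfl, hf.map_turn, h1, hL, hR]
  · exact if_neg hx.not_ge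

theorem conjLift_congr (h : φ (f x) = ψ (f x)) :
    conjLift f u g v φ x = conjLift f u g v ψ x := by
  simp only [conjLift, h]

theorem map_conjLift (hf : IsUnimodalAt f u) (hg : IsUnimodalAt g v)
    (hφ : MapsTo φ (Icc 0 1) (Icc 0 1)) (hx : x ∈ Icc (0:ℝ) 1) :
    g (conjLift f u g v φ x) = φ (f x) := by
  have hy := hφ (hf.mapsTo hx)
  unfold conjLift
  split_ifs
  exacts [hg.bijOn_left.surjOn.rightInvOn_invFunOn hy,
    hg.bijOn_right.surjOn.rightInvOn_invFunOn hy]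

theorem conjLift_mapsTo (hf : IsUnimodalAt f u) (hg : IsUnimodalAt g v)
    (hφ : MapsTo φ (Icc 0 1) (Icc 0 1)) : MapsTo (conjLift f u g v φ) (Icc 0 1) (Icc 0 1) := by
  intro x hx
  have hy := hφ (hf.mapsTo hx)
  unfold conjLift
  split_ifs
  · exact Icc_subset_Icc_right hg.mem_Ioo.2.le (hg.bijOn_left.surjOn.mapsTo_invFunOn hy)
  · exact Icc_subset_Icc_left hg.mem_Ioo.1.le (hg.bijOn_right.surjOn.mapsTo_invFunOn hy)

theorem conjLift_strictMonoOn (hf : IsUnimodalAt f u) (hg : IsUnimodalAt g v)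
    (hφ : StrictMonoOn φ (Icc 0 1)) (hφI : MapsTo φ (Icc 0 1) (Icc 0 1)) (h1 : φ 1 = 1) :
    StrictMonoOn (conjLift f u g v φ) (Icc 0 1) := by
  have hu0 := hf.mem_Ioo.1.le
  have hu1 := hf.mem_Ioo.2.le
  rw [← Icc_union_Icc_eq_Icc hu0 hu1]
  refine StrictMonoOn.union ?_ ?_ (isGreatest_Icc hu0) (isLeast_Icc hu1)
  · refine (((hg.strictMonoOn.strictMonoOn_invFunOn hg.bijOn_left.surjOn).comp hφ hφI).comp
      hf.strictMonoOn hf.bijOn_left.mapsTo).congr fun x hx => ?_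
    exact (conjLift_of_le hx.2).symm
  · refine (((hg.strictAntiOn.strictAntiOn_invFunOn hg.bijOn_right.surjOn).comp_strictMonoOn
      hφ hφI).comp hf.strictAntiOn hf.bijOn_right.mapsTo).congr fun x hx => ?_
    exact (conjLift_of_ge hf hg h1 hx.1).symm

theorem conjLift_surjOn (hf : IsUnimodalAt f u) (hg : IsUnimodalAt g v)
    (hφ : SurjOn φ (Icc 0 1) (Icc 0 1)) (h1 : φ 1 = 1) :
    SurjOn (conjLift f u g v φ) (Icc 0 1) (Icc 0 1) := by
  intro y hy
  obtain ⟨z, hz, hφz⟩ := hφ (hg.mapsTo hy)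
  rcases le_total y v with hyv | hyv
  · obtain ⟨x, hx, rfl⟩ := hf.bijOn_left.surjOn hz
    refine ⟨x, Icc_subset_Icc_right hf.mem_Ioo.2.le hx, ?_⟩
    rw [conjLift_of_le hx.2, hφz, hg.invFunOn_left_apply ⟨hy.1, hyv⟩]
  · obtain ⟨x, hx, rfl⟩ := hf.bijOn_right.surjOn hz
    refine ⟨x, Icc_subset_Icc_left hf.mem_Ioo.1.le hx, ?_⟩
    rw [conjLift_of_ge hf hg h1 hx.1, hφz, hg.invFunOn_right_apply ⟨hyv, hy.2⟩]

theorem approxConj_succ : approxConj f u g v (n + 1) = conjLift f u g v (approxConj f u g v n) :=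
  iterate_succ_apply' _ _ _

theorem approxConj_mapsTo (hf : IsUnimodalAt f u) (hg : IsUnimodalAt g v) :
    MapsTo (approxConj f u g v n) (Icc 0 1) (Icc 0 1) := by
  induction n with
  | zero => exact mapsTo_id _
  | succ n ih => rw [approxConj_succ]; exact conjLift_mapsTo hf hg ih

theorem approxConj_succ_of_mem (hf : IsUnimodalAt f u) (hg : IsUnimodalAt g v)
    (hx : x ∈ preimZero f (n + 1)) : approxConj f u g v (n + 1) x = approxConj f u g v n x := by
  induction n generalizing x with
  | zero =>
    rcases (hf.eq_zero_iff hx.1).1 hx.2 with rfl | rfl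
    · have hL := hg.invFunOn_left_apply (left_mem_Icc.2 hg.mem_Ioo.1.le)
      rw [hg.map_zero] at hL
      rw [approxConj_succ, conjLift_of_le hf.mem_Ioo.1.le, hf.map_zero]
      exact hL
    · have hR := hg.invFunOn_right_apply (right_mem_Icc.2 hg.mem_Ioo.2.le)
      rw [hg.map_one] at hR
      rw [approxConj_succ, conjLift_of_ge hf hg rfl hf.mem_Ioo.2.le, hf.map_one]
      exact hR
  | succ n ih =>
    calc approxConj f u g v (n + 2) x
        = conjLift f u g v (approxConj f u g v (n + 1)) x := by rw [approxConj_succ]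
      _ = conjLift f u g v (approxConj f u g v n) x :=
          conjLift_congr (ih ((mem_preimZero_succ_iff hf.mapsTo hx.1).1 hx))
      _ = approxConj f u g v (n + 1) x := by rw [approxConj_succ]

theorem approxConj_eq_of_le (hf : IsUnimodalAt f u) (hg : IsUnimodalAt g v)
    (hx : x ∈ preimZero f (n + 1)) {m : ℕ} (hnm : n ≤ m) :
    approxConj f u g v m x = approxConj f u g v n x := by
  induction m, hnm using Nat.le_induction with
  | base => rfl
  | succ m hnm ih =>
    rw [approxConj_succ_of_mem hf hg (preimZero_mono hf.map_zero (by omega) hx), ih]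

theorem approxConj_one (hf : IsUnimodalAt f u) (hg : IsUnimodalAt g v) :
    approxConj f u g v n 1 = 1 :=
  approxConj_eq_of_le hf hg (one_mem_preimZero hf.map_zero hf.map_one 0) (Nat.zero_le n)

theorem approxConj_strictMonoOn (hf : IsUnimodalAt f u) (hg : IsUnimodalAt g v) :
    StrictMonoOn (approxConj f u g v n) (Icc 0 1) := by
  induction n with
  | zero => exact strictMonoOn_id
  | succ n ih =>
    rw [approxConj_succ]
    exact conjLift_strictMonoOn hf hg ih (approxConj_mapsTo hf hg) (approxConj_one hf hg)

theorem approxConj_surjOn (hf : IsUnimodalAt f u) (hg : IsUnimodalAt g v) :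
    SurjOn (approxConj f u g v n) (Icc 0 1) (Icc 0 1) := by
  induction n with
  | zero => exact surjOn_id _
  | succ n ih =>
    rw [approxConj_succ]
    exact conjLift_surjOn hf hg ih (approxConj_one hf hg)

theorem iterate_approxConj (hf : IsUnimodalAt f u) (hg : IsUnimodalAt g v)
    (hx : x ∈ Icc (0:ℝ) 1) : g^[n] (approxConj f u g v n x) = f^[n] x := by
  induction n generalizing x with
  | zero => rfl
  | succ n ih =>
    rw [iterate_succ_apply, approxConj_succ, map_conjLift hf hg (approxConj_mapsTo hf hg) hx,
      ih (hf.mapsTo hx), iterate_succ_apply]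

theorem approxConj_mem_preimZero_iff (hf : IsUnimodalAt f u) (hg : IsUnimodalAt g v)
    (hx : x ∈ Icc (0:ℝ) 1) :
    approxConj f u g v n x ∈ preimZero g (n + 1) ↔ x ∈ preimZero f (n + 1) := by
  simp only [preimZero, mem_sep_iff, hx, approxConj_mapsTo hf hg hx, true_and,
    iterate_succ_apply', iterate_approxConj hf hg hx]
  have hxn := hf.mapsTo.iterate n hx
  rw [hg.eq_zero_iff hxn, hf.eq_zero_iff hxn]

theorem conjLimit_eq_approxConj (hf : IsUnimodalAt f u) (hg : IsUnimodalAt g v)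
    (hx : x ∈ preimZero f (n + 1)) : conjLimit f u g v x = approxConj f u g v n x := by
  refine IsGreatest.csSup_eq ⟨⟨n, x, hx, le_rfl, rfl⟩, ?_⟩
  rintro _ ⟨m, d, hd, hdx, rfl⟩
  calc approxConj f u g v m d = approxConj f u g v (max m n) d :=
        (approxConj_eq_of_le hf hg hd (le_max_left m n)).symm
    _ ≤ approxConj f u g v (max m n) x :=
        (approxConj_strictMonoOn hf hg).monotoneOn hd.1 hx.1 hdx
    _ = approxConj f u g v n x := approxConj_eq_of_le hf hg hx (le_max_right m n)

theorem conjLimit_zero (hf : IsUnimodalAt f u) (hg : IsUnimodalAt g v) :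
    conjLimit f u g v 0 = 0 :=
  conjLimit_eq_approxConj hf hg (zero_mem_preimZero hf.map_zero 1)

theorem conjLimit_one (hf : IsUnimodalAt f u) (hg : IsUnimodalAt g v) :
    conjLimit f u g v 1 = 1 :=
  conjLimit_eq_approxConj hf hg (one_mem_preimZero hf.map_zero hf.map_one 0)

theorem conjLimit_monotoneOn (hf : IsUnimodalAt f u) (hg : IsUnimodalAt g v) :
    MonotoneOn (conjLimit f u g v) (Icc 0 1) := by
  intro x hx y _ hxy
  refine csSup_le_csSup ⟨1, ?_⟩ ⟨0, 0, 0, zero_mem_preimZero hf.map_zero 1, hx.1, rfl⟩ ?_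
  · rintro _ ⟨n, d, hd, -, rfl⟩
    exact (approxConj_mapsTo hf hg hd.1).2
  · rintro _ ⟨n, d, hd, hdx, rfl⟩
    exact ⟨n, d, hd, hdx.trans hxy, rfl⟩

theorem conjLimit_mapsTo (hf : IsUnimodalAt f u) (hg : IsUnimodalAt g v) :
    MapsTo (conjLimit f u g v) (Icc 0 1) (Icc 0 1) := by
  have hmaps := (conjLimit_monotoneOn hf hg).mapsTo_Icc
  rwa [conjLimit_zero hf hg, conjLimit_one hf hg] at hmaps

theorem conjLimit_lt_conjLimit (hf : IsUnimodalAt f u) (hg : IsUnimodalAt g v) {x y : ℝ}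
    (hx : x ∈ completePreimZero f) (hy : y ∈ completePreimZero f) (hxy : x < y) :
    conjLimit f u g v x < conjLimit f u g v y := by
  obtain ⟨n, hn⟩ := mem_completePreimZero.1 hx
  obtain ⟨m, hm⟩ := mem_completePreimZero.1 hy
  have hn' := preimZero_mono hf.map_zero (Nat.succ_le_succ (le_max_left n m)) hn
  have hm' := preimZero_mono hf.map_zero (Nat.succ_le_succ (le_max_right n m)) hm
  rw [conjLimit_eq_approxConj hf hg hn', conjLimit_eq_approxConj hf hg hm']
  exact approxConj_strictMonoOn hf hg hn'.1 hm'.1 hxy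

theorem conjLimit_strictMonoOn (hf : IsUnimodalAt f u) (hg : IsUnimodalAt g v)
    (hfd : Icc (0:ℝ) 1 ⊆ closure (completePreimZero f)) :
    StrictMonoOn (conjLimit f u g v) (Icc 0 1) := by
  intro x hx y hy hxy
  have hsub : Ioo x y ⊆ closure (completePreimZero f) :=
    Ioo_subset_Icc_self.trans ((Icc_subset_Icc hx.1 hy.2).trans hfd)
  obtain ⟨d₁, hd₁, hxd₁, hd₁y⟩ := inter_Ioo_nonempty_of_Ioo_subset_closure hsub hxy
  obtain ⟨d₂, hd₂, hd₁d₂, hd₂y⟩ := inter_Ioo_nonempty_of_Ioo_subset_closure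
    ((Ioo_subset_Ioo_left hxd₁.le).trans hsub) hd₁y
  calc conjLimit f u g v x ≤ conjLimit f u g v d₁ :=
        conjLimit_monotoneOn hf hg hx (completePreimZero_subset_Icc hd₁) hxd₁.le
    _ < conjLimit f u g v d₂ := conjLimit_lt_conjLimit hf hg hd₁ hd₂ hd₁d₂
    _ ≤ conjLimit f u g v y :=
        conjLimit_monotoneOn hf hg (completePreimZero_subset_Icc hd₂) hy hd₂y.le

theorem completePreimZero_subset_image_conjLimit (hf : IsUnimodalAt f u)
    (hg : IsUnimodalAt g v) : completePreimZero g ⊆ conjLimit f u g v '' Icc 0 1 := by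
  intro y hy
  obtain ⟨n, hn⟩ := mem_completePreimZero.1 hy
  obtain ⟨x, hx, rfl⟩ := approxConj_surjOn (n := n) hf hg hn.1
  exact ⟨x, hx, conjLimit_eq_approxConj hf hg ((approxConj_mem_preimZero_iff hf hg hx).1 hn)⟩

theorem conjLimit_continuousOn (hf : IsUnimodalAt f u) (hg : IsUnimodalAt g v)
    (hgd : Icc (0:ℝ) 1 ⊆ closure (completePreimZero g)) :
    ContinuousOn (conjLimit f u g v) (Icc 0 1) :=
  (conjLimit_monotoneOn hf hg).continuousOn_of_subset_closure_image (conjLimit_mapsTo hf hg)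
    (hgd.trans (closure_mono (completePreimZero_subset_image_conjLimit hf hg)))

theorem conjLimit_surjOn (hf : IsUnimodalAt f u) (hg : IsUnimodalAt g v)
    (hgd : Icc (0:ℝ) 1 ⊆ closure (completePreimZero g)) :
    SurjOn (conjLimit f u g v) (Icc 0 1) (Icc 0 1) := by
  have hsurj := intermediate_value_Icc zero_le_one (conjLimit_continuousOn hf hg hgd)
  rwa [conjLimit_zero hf hg, conjLimit_one hf hg] at hsurj

theorem conjLimit_semiconj (hf : IsUnimodalAt f u) (hg : IsUnimodalAt g v)
    (hfd : Icc (0:ℝ) 1 ⊆ closure (completePreimZero f))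
    (hgd : Icc (0:ℝ) 1 ⊆ closure (completePreimZero g)) :
    ∀ x ∈ Icc (0:ℝ) 1, conjLimit f u g v (f x) = g (conjLimit f u g v x) := by
  have hc := conjLimit_continuousOn hf hg hgd
  refine EqOn.of_subset_closure ?_ (hc.comp hf.continuousOn hf.mapsTo)
    (hg.continuousOn.comp hc (conjLimit_mapsTo hf hg)) completePreimZero_subset_Icc hfd
  intro x hx
  obtain ⟨n, hn⟩ := mem_completePreimZero.1 hx
  have hn' : x ∈ preimZero f (n + 2) := preimZero_mono hf.map_zero (Nat.le_succ _) hn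
  dsimp only
  rw [conjLimit_eq_approxConj hf hg ((mem_preimZero_succ_iff hf.mapsTo hn'.1).1 hn'),
    conjLimit_eq_approxConj hf hg hn', approxConj_succ,
    map_conjLift hf hg (approxConj_mapsTo hf hg) hn'.1]

theorem exists_conj_of_dense (hf : IsUnimodalAt f u) (hg : IsUnimodalAt g v)
    (hfd : Icc (0:ℝ) 1 ⊆ closure (completePreimZero f))
    (hgd : Icc (0:ℝ) 1 ⊆ closure (completePreimZero g)) :
    ∃ h, IsHomeoI h ∧ h 0 = 0 ∧ ∀ x ∈ Icc (0:ℝ) 1, h (f x) = g (h x) :=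
  ⟨conjLimit f u g v, ⟨conjLimit_continuousOn hf hg hgd, conjLimit_mapsTo hf hg,
    (conjLimit_strictMonoOn hf hg hfd).injOn, conjLimit_surjOn hf hg hgd⟩,
    conjLimit_zero hf hg, conjLimit_semiconj hf hg hfd hgd⟩

end Construction

theorem subset_closure_completePreimZero_of_semiconj {f g h : ℝ → ℝ}
    (hf : MapsTo f (Icc 0 1) (Icc 0 1)) (hh : IsHomeoI h) (h0 : h 0 = 0)
    (hconj : ∀ x ∈ Icc (0:ℝ) 1, h (f x) = g (h x))
    (hfd : Icc (0:ℝ) 1 ⊆ closure (completePreimZero f)) :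
    Icc (0:ℝ) 1 ⊆ closure (completePreimZero g) := by
  obtain ⟨hc, hbij⟩ := hh
  have himage : h '' completePreimZero f ⊆ completePreimZero g := by
    rintro _ ⟨x, hx, rfl⟩
    obtain ⟨n, hxI, hxn⟩ := mem_completePreimZero.1 hx
    refine mem_completePreimZero.2 ⟨n, hbij.mapsTo hxI, ?_⟩
    rw [← apply_iterate_of_semiconjOn hf hconj _ hxI, hxn, h0]
  have hcl : closure (completePreimZero f) ⊆ Icc 0 1 :=
    closure_minimal completePreimZero_subset_Icc isClosed_Icc
  calc Icc (0:ℝ) 1 ⊆ h '' Icc 0 1 := hbij.surjOn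
    _ ⊆ h '' closure (completePreimZero f) := image_mono hfd
    _ ⊆ closure (h '' completePreimZero f) := (hc.mono hcl).image_closure
    _ ⊆ closure (completePreimZero g) := closure_mono himage

theorem tent_of_le {x : ℝ} (hx : x ≤ 1 / 2) : tent x = 2 * x :=
  min_eq_left (by linarith)

theorem tent_of_ge {x : ℝ} (hx : 1 / 2 ≤ x) : tent x = 2 - 2 * x :=
  min_eq_right (by linarith)

theorem tent_isUnimodalAt : IsUnimodalAt tent (1 / 2) where
  continuousOn := (by unfold tent; fun_prop : Continuous tent).continuousOn
  mem_Ioo := by norm_num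
  strictMonoOn x hx y hy hxy := by rw [tent_of_le hx.2, tent_of_le hy.2]; linarith
  strictAntiOn x hx y hy hxy := by rw [tent_of_ge hx.1, tent_of_ge hy.1]; linarith
  map_zero := by norm_num [tent]
  map_one := by norm_num [tent]
  map_turn := by norm_num [tent]

theorem exists_mem_preimZero_tent_abs_sub_le (n : ℕ) {x : ℝ} (hx : x ∈ Icc (0:ℝ) 1) :
    ∃ d ∈ preimZero tent (n + 1), |x - d| ≤ (1 / 2) ^ n := by
  induction n generalizing x with
  | zero =>
    refine ⟨0, zero_mem_preimZero tent_isUnimodalAt.map_zero 1, ?_⟩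
    simpa [abs_of_nonneg hx.1] using hx.2
  | succ n ih =>
    rcases le_total x (1 / 2) with hx2 | hx2
    · obtain ⟨d, hd, hxd⟩ := ih (x := 2 * x) ⟨by linarith [hx.1], by linarith⟩
      refine ⟨d / 2, (mem_preimZero_succ_iff tent_isUnimodalAt.mapsTo
        ⟨by linarith [hd.1.1], by linarith [hd.1.2]⟩).2 ?_, ?_⟩
      · rwa [tent_of_le (by linarith [hd.1.2]), mul_div_cancel₀ d two_ne_zero]
      · have : |x - d / 2| = |2 * x - d| / 2 := by
          rw [show 2 * x - d = 2 * (x - d / 2) by ring, abs_mul, abs_two]; ring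
        rw [this, pow_succ]; linarith
    · obtain ⟨d, hd, hxd⟩ := ih (x := 2 - 2 * x) ⟨by linarith [hx.2], by linarith⟩
      refine ⟨1 - d / 2, (mem_preimZero_succ_iff tent_isUnimodalAt.mapsTo
        ⟨by linarith [hd.1.2], by linarith [hd.1.1]⟩).2 ?_, ?_⟩
      · rwa [tent_of_ge (by linarith [hd.1.2]), show 2 - 2 * (1 - d / 2) = d by ring]
      · have : |x - (1 - d / 2)| = |2 - 2 * x - d| / 2 := by
          rw [show 2 - 2 * x - d = -2 * (x - (1 - d / 2)) by ring, abs_mul]; norm_num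
        rw [this, pow_succ]; linarith

theorem Icc_subset_closure_completePreimZero_tent :
    Icc (0:ℝ) 1 ⊆ closure (completePreimZero tent) := by
  intro x hx
  refine Metric.mem_closure_iff.2 fun ε hε => ?_
  obtain ⟨n, hn⟩ := exists_pow_lt_of_lt_one hε (by norm_num : (1 / 2 : ℝ) < 1)
  obtain ⟨d, hd, hxd⟩ := exists_mem_preimZero_tent_abs_sub_le n hx
  exact ⟨d, mem_completePreimZero.2 ⟨n, hd⟩, (Real.dist_eq x d).trans_le hxd |>.trans_lt hn⟩

/-- A unimodal map `g : [0,1] → [0,1]` is topologically conjugated to the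
tent map `f` if and only if the complete pre-image of `0` under `g` is dense in `[0,1]`. -/
theorem unimodal_conj_tent_iff_dense_preimage (g : ℝ → ℝ) (hg : IsUnimodal g) :
    (∃ h : ℝ → ℝ, ConjTent g h) ↔ Icc (0:ℝ) 1 ⊆ closure (completePreimZero g) := by
  obtain ⟨v, hgv⟩ := hg.exists_isUnimodalAt
  constructor
  · rintro ⟨h, hh, h0, hconj⟩
    exact subset_closure_completePreimZero_of_semiconj tent_isUnimodalAt.mapsTo hh h0 hconj
      Icc_subset_closure_completePreimZero_tent
  · exact exists_conj_of_dense tent_isUnimodalAt hgv Icc_subset_closure_completePreimZero_tent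
end

section
/- For every natural number t ≥ 1 the map ξ_t satisfies ξ_t ∘ f = f ∘ ξ_t, where f is the tent map. -/
open Set

/-! Both maps are restrictions of the triangle wave `T(y) = dist(y, 2ℤ)`: `ξ_t(x) = T(tx)` and,
on `[0,1]`, `f(x) = T(2x)`. Since `T(y) ≡ ±y (mod 2)` and `T` is even and `2`-periodic,
`T(n T(y)) = T(ny)` for every integer `n`, so `ξ_t(f x) = T(2tx) = f(ξ_t x)`. -/

noncomputable def triangleWave (y : ℝ) : ℝ := 2 * |y / 2 - round (y / 2)|

namespace triangleWave

theorem add_two_mul_intCast (y : ℝ) (k : ℤ) : triangleWave (y + 2 * k) = triangleWave y := by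
  rw [triangleWave, triangleWave, show (y + 2 * k) / 2 = y / 2 + k by ring, round_add_intCast]
  push_cast
  ring_nf

theorem neg (y : ℝ) : triangleWave (-y) = triangleWave y := by
  -- `round` realizes the distance to `ℤ`, which is invariant under negation.
  have key (x : ℝ) : |-x - round (-x)| ≤ |x - round x| :=
    calc |-x - round (-x)| ≤ |-x - ((-round x : ℤ) : ℝ)| := round_le _ _
      _ = |x - round x| := by rw [← abs_neg]; push_cast; ring_nf
  have h₁ := key (y / 2)
  have h₂ := key (-(y / 2))
  rw [neg_neg] at h₂
  rw [triangleWave, triangleWave, neg_div]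
  linarith

theorem two_sub (y : ℝ) : triangleWave (2 - y) = triangleWave y := by
  simpa [neg_add_eq_sub] using (add_two_mul_intCast (-y) 1).trans (neg y)

theorem eq_self_of_mem_Icc {y : ℝ} (hy : y ∈ Icc (0 : ℝ) 1) : triangleWave y = y := by
  have hfract : Int.fract (y / 2) = y / 2 :=
    Int.fract_eq_self.mpr ⟨by linarith [hy.1], by linarith [hy.2]⟩
  rw [triangleWave, abs_sub_round_eq_min, hfract, min_eq_left (by linarith [hy.2])]
  ring

theorem mem_Icc (y : ℝ) : triangleWave y ∈ Icc (0 : ℝ) 1 := by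
  have := abs_sub_round (y / 2)
  exact ⟨by unfold triangleWave; positivity, by unfold triangleWave; linarith⟩

theorem exists_eq_add_or_eq_neg_add (y : ℝ) :
    ∃ m : ℤ, triangleWave y = y + 2 * m ∨ triangleWave y = -y + 2 * m := by
  rcases abs_choice (y / 2 - round (y / 2)) with h | h
  · exact ⟨-round (y / 2), Or.inl (by rw [triangleWave, h]; push_cast; ring)⟩
  · exact ⟨round (y / 2), Or.inr (by rw [triangleWave, h]; ring)⟩

theorem intCast_mul_triangleWave (n : ℤ) (y : ℝ) :
    triangleWave (n * triangleWave y) = triangleWave (n * y) := by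
  obtain ⟨m, hm | hm⟩ := exists_eq_add_or_eq_neg_add y
  · rw [hm, show (n : ℝ) * (y + 2 * m) = n * y + 2 * ((n * m : ℤ) : ℝ) by
      push_cast; ring, add_two_mul_intCast]
  · rw [hm, show (n : ℝ) * (-y + 2 * m) = -(n * y) + 2 * ((n * m : ℤ) : ℝ) by
      push_cast; ring, add_two_mul_intCast, neg]

theorem eq_neg_one_zpow_floor_mul_fract (y : ℝ) :
    triangleWave y = (1 - (-1 : ℝ) ^ ⌊y⌋) / 2 + (-1 : ℝ) ^ ⌊y⌋ * Int.fract y := by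
  have hr : Int.fract y ∈ Icc (0 : ℝ) 1 := ⟨Int.fract_nonneg y, (Int.fract_lt_one y).le⟩
  conv_lhs => rw [← Int.fract_add_floor y]
  rcases Int.even_or_odd ⌊y⌋ with heven | hodd
  · rw [heven.neg_one_zpow]
    obtain ⟨m, hm⟩ := heven
    rw [hm, Int.cast_add, ← two_mul, add_two_mul_intCast, eq_self_of_mem_Icc hr]
    ring
  · rw [hodd.neg_one_zpow]
    obtain ⟨m, hm⟩ := hodd
    have hr' : 1 - Int.fract y ∈ Icc (0 : ℝ) 1 := ⟨by linarith [hr.2], by linarith [hr.1]⟩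
    rw [hm, show Int.fract y + ((2 * m + 1 : ℤ) : ℝ) = 2 - (1 - Int.fract y) + 2 * m by
      push_cast; ring, add_two_mul_intCast, two_sub, eq_self_of_mem_Icc hr']
    ring

end triangleWave

theorem xi_eq_triangleWave (t : ℕ) (x : ℝ) : xi t x = triangleWave (t * x) := by
  rw [xi, triangleWave.eq_neg_one_zpow_floor_mul_fract]

theorem tent_eq_triangleWave {x : ℝ} (hx : x ∈ Icc (0 : ℝ) 1) :
    tent x = triangleWave (2 * x) := by
  rcases le_total x (1 / 2) with h | h
  · rw [triangleWave.eq_self_of_mem_Icc ⟨by linarith [hx.1], by linarith⟩, tent,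
      min_eq_left (by linarith)]
  · rw [← triangleWave.two_sub,
      triangleWave.eq_self_of_mem_Icc ⟨by linarith [hx.2], by linarith⟩, tent,
      min_eq_right (by linarith)]

theorem xi_semiconj_tent_general (t : ℕ) :
    ∀ x ∈ Icc (0:ℝ) 1, xi t (tent x) = tent (xi t x) := by
  intro x hx
  rw [xi_eq_triangleWave, xi_eq_triangleWave, tent_eq_triangleWave hx,
    tent_eq_triangleWave (triangleWave.mem_Icc _)]
  calc triangleWave (t * triangleWave (2 * x))
      = triangleWave (t * (2 * x)) := by
        exact_mod_cast triangleWave.intCast_mul_triangleWave t (2 * x)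
    _ = triangleWave (2 * (t * x)) := by ring_nf
    _ = triangleWave (2 * triangleWave (t * x)) := by
        exact_mod_cast (triangleWave.intCast_mul_triangleWave 2 (t * x)).symm

/-- For every natural number `t ≥ 1` the map `ξ_t` satisfies
`ξ_t ∘ f = f ∘ ξ_t`, where `f` is the tent map. -/
theorem xi_semiconj_tent (t : ℕ) (ht : 1 ≤ t) :
    ∀ x ∈ Icc (0:ℝ) 1, xi t (tent x) = tent (xi t x) :=
  xi_semiconj_tent_general t
end

section
/- Let g be a carcass map whose complete pre-image of 0 is dense in [0,1], let a ∈ (0,1) be the smallest positive kink of g, and let ψ be a piecewise linear self-semiconjugation of g. If the right derivative ψ'(0) of ψ at 0 is strictly greater than the right derivative g'(0) of g at 0, then a·g'(0)/ψ'(0) is the smallest positive kink of ψ. -/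
open Set

/-! Near `0` both maps are linear: `g x = g'(0) x` up to the first kink `a` of `g`, and
`ψ x = ψ'(0) x` up to the first kink `c` of `ψ`. Density of the pre-images of `0` forbids an
invariant interval `(0, r)`, which forces `g'(0) > 1` and `ψ 0 = 0`. Near `0` the
semiconjugacy then reads `ψ (g'(0) x) = g (ψ'(0) x)`. If `c < a g'(0)/ψ'(0)`, the right-hand
side is linear around `x = c / g'(0)`, so `ψ` would be differentiable at `c`; and if `ψ` were
differentiable at `a g'(0)/ψ'(0)`, then `g` would be differentiable at `a = ψ'(0) (a / ψ'(0))`. -/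

open Filter Topology

theorem slope_eq_of_hasDerivWithinAt_Ioi {f : ℝ → ℝ} {c e d x z : ℝ} (hxz : x < z)
    (hf : ∀ y ∈ Icc x z, f y = c * y + e) (hd : HasDerivWithinAt f d (Ioi x) x) : c = d := by
  have hc : HasDerivWithinAt f c (Ioi x) x := by
    refine ((hasDerivAt_const_mul c).add_const e).hasDerivWithinAt.congr_of_eventuallyEq
      ?_ (hf x ⟨le_rfl, hxz.le⟩)
    filter_upwards [Ioo_mem_nhdsGT hxz] with y hy
    exact hf y ⟨hy.1.le, hy.2.le⟩
  exact (uniqueDiffWithinAt_Ioi x).eq_deriv _ hc hd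

theorem slope_eq_of_hasDerivWithinAt_Iio {f : ℝ → ℝ} {c e d w x : ℝ} (hwx : w < x)
    (hf : ∀ y ∈ Icc w x, f y = c * y + e) (hd : HasDerivWithinAt f d (Iio x) x) : c = d := by
  have hc : HasDerivWithinAt f c (Iio x) x := by
    refine ((hasDerivAt_const_mul c).add_const e).hasDerivWithinAt.congr_of_eventuallyEq
      ?_ (hf x ⟨hwx.le, le_rfl⟩)
    filter_upwards [Ioo_mem_nhdsLT hwx] with y hy
    exact hf y ⟨hy.1.le, hy.2.le⟩
  exact (uniqueDiffWithinAt_Iio x).eq_deriv _ hc hd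

namespace IsPLOn

variable {f : ℝ → ℝ} {a b : ℝ}

theorem finite_setOf_not_differentiableAt (hf : IsPLOn f a b) :
    {x | x ∈ Ioo a b ∧ ¬DifferentiableAt ℝ f x}.Finite := by
  obtain ⟨n, p, -, hp0, hpn, -, haff⟩ := hf
  refine ((finite_Iic n).image p).subset ?_
  rintro x ⟨hx, hnd⟩
  by_contra hxp
  have hp0x : p 0 < x := hp0 ▸ hx.1
  set i := Nat.findGreatest (fun j => p j < x) n
  have hpi : p i < x := Nat.findGreatest_spec (P := fun j => p j < x) (Nat.zero_le n) hp0x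
  have hin : i < n := by
    refine (Nat.findGreatest_le n).lt_of_ne fun h => ?_
    rw [show i = n from h, hpn] at hpi
    exact hpi.not_gt hx.2
  have hxpi : x < p (i + 1) := by
    refine lt_of_le_of_ne ?_ fun h => hxp ⟨i + 1, hin, h.symm⟩
    exact not_lt.1 (Nat.findGreatest_is_greatest (Nat.lt_succ_self i) hin)
  obtain ⟨c, e, hce⟩ := haff i hin
  refine hnd (((hasDerivAt_const_mul c).add_const e).differentiableAt.congr_of_eventuallyEq ?_)
  filter_upwards [Ioo_mem_nhds hpi hxpi] with y hy
  exact hce y ⟨hy.1.le, hy.2.le⟩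

theorem eq_affine_of_differentiableAt (hf : IsPLOn f a b) {d t : ℝ}
    (hd : HasDerivWithinAt f d (Ioi a) a) (htb : t ≤ b)
    (hdiff : ∀ y ∈ Ioo a t, DifferentiableAt ℝ f y) :
    ∀ x ∈ Icc a t, f x = f a + d * (x - a) := by
  obtain ⟨n, p, -, hp0, hpn, hlt, haff⟩ := hf
  have hap : ∀ i ≤ n, a ≤ p i := by
    intro i hi
    induction i with
    | zero => exact hp0.ge
    | succ i ih => exact (ih (by omega)).trans (hlt i hi).le
  suffices key : ∀ i ≤ n, ∀ x ∈ Icc a (min (p i) t), f x = f a + d * (x - a) from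
    fun x hx => key n le_rfl x (by rwa [hpn, min_eq_right htb])
  intro i hi
  induction i with
  | zero =>
    rintro x ⟨hax, hx⟩
    obtain rfl : x = a := le_antisymm (hp0 ▸ hx.trans (min_le_left _ _)) hax
    ring
  | succ i ih =>
    intro x hx
    rcases le_or_gt t (p i) with hti | hit
    · have hxt : x ≤ t := hx.2.trans (min_le_right _ _)
      exact ih (by omega) x ⟨hx.1, le_min (hxt.trans hti) hxt⟩
    have hleft : ∀ y ∈ Icc a (p i), f y = d * y + (f a - d * a) := fun y hy => by
      rw [ih (by omega) y ⟨hy.1, le_min hy.2 (hy.2.trans hit.le)⟩]; ring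
    have hright : HasDerivWithinAt f d (Ioi (p i)) (p i) := by
      rcases (hap i (by omega)).eq_or_lt with h | h
      · rwa [← h]
      · have hD := (hdiff (p i) ⟨h, hit⟩).hasDerivAt
        rw [slope_eq_of_hasDerivWithinAt_Iio h hleft hD.hasDerivWithinAt]
        exact hD.hasDerivWithinAt
    obtain ⟨c, e, hce⟩ := haff i hi
    obtain rfl : c = d := slope_eq_of_hasDerivWithinAt_Ioi (hlt i hi) hce hright
    rcases le_or_gt x (p i) with hxi | hxi
    · linear_combination hleft x ⟨hx.1, hxi⟩
    · linear_combination hce x ⟨hxi.le, hx.2.trans (min_le_left _ _)⟩ -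
        hce (p i) ⟨le_rfl, (hlt i hi).le⟩ + hleft (p i) ⟨hap i (by omega), le_rfl⟩

theorem eq_of_forall_kink_le {d t : ℝ} (hf : IsPLOn f 0 1)
    (hd : HasDerivWithinAt f d (Ioi 0) 0) (ht : t ≤ 1) (hkink : ∀ y, IsKink f y → t ≤ y) :
    ∀ x ∈ Icc 0 t, f x = f 0 + d * x := by
  intro x hx
  rw [hf.eq_affine_of_differentiableAt hd ht (fun y hy => ?_) x hx, sub_zero]
  by_contra hnd
  exact (hkink y ⟨⟨hy.1, hy.2.trans_le ht⟩, hnd⟩).not_gt hy.2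

theorem exists_isLeast_kink {d : ℝ} (hf : IsPLOn f 0 1)
    (hmaps : MapsTo f (Icc 0 1) (Icc 0 1)) (hd : HasDerivWithinAt f d (Ioi 0) 0) (hd1 : 1 < d) :
    ∃ c, IsLeast {x | IsKink f x} c ∧ ∀ x ∈ Icc 0 c, f x = f 0 + d * x := by
  have hne : {x | IsKink f x}.Nonempty := by
    by_contra hempty
    have h1 := hf.eq_of_forall_kink_le hd le_rfl (fun y hy => (hempty ⟨y, hy⟩).elim) 1
      ⟨zero_le_one, le_rfl⟩
    have h0 := (hmaps ⟨le_rfl, zero_le_one⟩).1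
    have h2 := (hmaps ⟨zero_le_one, le_rfl⟩).2
    linarith
  have hfin : {x | IsKink f x}.Finite := hf.finite_setOf_not_differentiableAt
  obtain ⟨c, hc⟩ := hfin.isCompact.exists_isLeast hne
  exact ⟨c, hc, hf.eq_of_forall_kink_le hd hc.1.1.2.le hc.2⟩

end IsPLOn

theorem not_dense_completePreimZero_of_mapsTo_Ioo {g : ℝ → ℝ} {r : ℝ} (hr : 0 < r)
    (hr1 : r ≤ 1) (hmaps : MapsTo g (Ioo 0 r) (Ioo 0 r)) :
    ¬Icc 0 1 ⊆ closure (completePreimZero g) := by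
  intro hdense
  obtain ⟨z, hz, hz0⟩ := mem_closure_iff.1 (hdense ⟨(half_pos hr).le, by linarith⟩)
    (Ioo 0 r) isOpen_Ioo ⟨half_pos hr, half_lt_self hr⟩
  simp only [completePreimZero, preimZero, mem_iUnion, mem_ofPred_eq] at hz0
  obtain ⟨m, -, -, hm⟩ := hz0
  exact (hmaps.iterate m hz).1.ne' hm

namespace IsUnimodal

variable {g : ℝ → ℝ}

theorem apply_zero (hg : IsUnimodal g) : g 0 = 0 := by
  obtain ⟨-, -, v, -, -, -, h0, -⟩ := hg
  exact h0

theorem pos_of_mem_Ioo (hg : IsUnimodal g) {x : ℝ} (hx : x ∈ Ioo 0 1) : 0 < g x := by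
  obtain ⟨-, -, v, hv, hmono, hanti, h0, h1, -⟩ := hg
  rcases le_total x v with hxv | hvx
  · simpa [h0] using hmono ⟨le_rfl, hv.1.le⟩ ⟨hx.1.le, hxv⟩ hx.1
  · simpa [h1] using hanti ⟨hvx, hx.2.le⟩ ⟨hv.2.le, le_rfl⟩ hx.2

theorem one_lt_of_dense_of_eq_mul (hg : IsUnimodal g)
    (hdense : Icc 0 1 ⊆ closure (completePreimZero g)) {a dg : ℝ} (ha : a ∈ Ioo 0 1)
    (hga : ∀ x ∈ Icc 0 a, g x = dg * x) : 1 < dg := by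
  by_contra! hdg
  refine not_dense_completePreimZero_of_mapsTo_Ioo ha.1 ha.2.le (fun x hx => ?_) hdense
  have hpos := hg.pos_of_mem_Ioo ⟨hx.1, hx.2.trans ha.2⟩
  rw [hga x ⟨hx.1.le, hx.2.le⟩] at hpos ⊢
  exact ⟨hpos, (mul_le_of_le_one_left hx.1.le hdg).trans_lt hx.2⟩

theorem apply_lt_of_isFixedPt (hg : IsUnimodal g)
    (hdense : Icc 0 1 ⊆ closure (completePreimZero g)) {q y : ℝ} (hq : Function.IsFixedPt g q)
    (hq0 : 0 < q) (hqy : q < y) (hy1 : y ≤ 1) : g y < q := by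
  obtain ⟨-, -, v, hv, hmono, hanti, h0, -, -⟩ := hg
  rcases le_or_gt q v with hqv | hvq
  · refine absurd hdense
      (not_dense_completePreimZero_of_mapsTo_Ioo hq0 (hqy.le.trans hy1) fun x hx => ?_)
    have hx0 := hmono ⟨le_rfl, hv.1.le⟩ ⟨hx.1.le, hx.2.le.trans hqv⟩ hx.1
    have hxq := hmono ⟨hx.1.le, hx.2.le.trans hqv⟩ ⟨hq0.le, hqv⟩ hx.2
    rw [h0] at hx0
    rw [hq] at hxq
    exact ⟨hx0, hxq⟩
  · have := hanti ⟨hvq.le, hqy.le.trans hy1⟩ ⟨(hvq.trans hqy).le, hy1⟩ hqy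
    rwa [hq] at this

end IsUnimodal

section LinearNearZero

variable {g ψ : ℝ → ℝ} {a c dg dψ : ℝ}

theorem IsSelfSemiconj.apply_zero_eq_zero (hψ : IsSelfSemiconj g ψ) (hg : IsUnimodal g)
    (hdense : Icc 0 1 ⊆ closure (completePreimZero g)) (ha : a ∈ Ioo 0 1)
    (hga : ∀ x ∈ Icc 0 a, g x = dg * x) (hdg : 1 < dg) (hc : 0 < c)
    (hψc : ∀ x ∈ Icc 0 c, ψ x = ψ 0 + dψ * x) (hdψ : 0 < dψ) : ψ 0 = 0 := by
  obtain ⟨-, hmaps, -, hcomm⟩ := hψ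
  have hfix : Function.IsFixedPt g (ψ 0) := by
    have h := hcomm 0 ⟨le_rfl, zero_le_one⟩
    rwa [hg.apply_zero, eq_comm] at h
  by_contra hne
  have hq0 : 0 < ψ 0 := (hmaps ⟨le_rfl, zero_le_one⟩).1.lt_of_ne' hne
  -- a point `x` so small that both `x` and `g x` lie where `g` and `ψ` are affine
  set x := min a (c / dg)
  have hx0 : 0 < x := lt_min ha.1 (div_pos hc (by linarith))
  have hxa : x ≤ a := min_le_left _ _
  have hdgx : dg * x ≤ c := (le_div_iff₀' (by linarith)).1 (min_le_right _ _)
  have hx1 : x ∈ Icc 0 1 := ⟨hx0.le, hxa.trans ha.2.le⟩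
  have hψx : ψ x = ψ 0 + dψ * x := hψc x ⟨hx0.le, by nlinarith⟩
  have hlt := hg.apply_lt_of_isFixedPt hdense hfix hq0 (by rw [hψx]; nlinarith) (hmaps hx1).2
  rw [← hcomm x hx1, hga x ⟨hx0.le, hxa⟩, hψc _ ⟨by nlinarith, hdgx⟩] at hlt
  nlinarith [mul_pos hdψ (mul_pos (by linarith : 0 < dg) hx0)]

theorem apply_mul_eq_apply_mul_of_commute (hcomm : ∀ x ∈ Icc 0 1, ψ (g x) = g (ψ x))
    (ha1 : a ≤ 1) (hga : ∀ x ∈ Icc 0 a, g x = dg * x) (hψc : ∀ x ∈ Icc 0 c, ψ x = dψ * x) :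
    ∀ x ∈ Icc 0 (min a c), ψ (dg * x) = g (dψ * x) := by
  rintro x ⟨hx0, hx⟩
  rw [← hga x ⟨hx0, hx.trans (min_le_left _ _)⟩, ← hψc x ⟨hx0, hx.trans (min_le_right _ _)⟩]
  exact hcomm x ⟨hx0, (hx.trans (min_le_left _ _)).trans ha1⟩

theorem mul_div_le_of_not_differentiableAt
    (hconj : ∀ x ∈ Icc 0 (min a c), ψ (dg * x) = g (dψ * x))
    (hga : ∀ x ∈ Icc 0 a, g x = dg * x) (hc : 0 < c) (hdg : 1 < dg) (hgt : dg < dψ)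
    (hnd : ¬DifferentiableAt ℝ ψ c) : a * dg / dψ ≤ c := by
  by_contra! hlt
  have hdg0 : 0 < dg := by linarith
  have hdψ0 : 0 < dψ := by linarith
  refine hnd ((hasDerivAt_const_mul dψ).differentiableAt.congr_of_eventuallyEq ?_)
  filter_upwards [eventually_gt_nhds hc, eventually_lt_nhds (lt_mul_right hc hdg),
    eventually_lt_nhds hlt] with y hy0 hyc hya
  rw [lt_div_iff₀ hdψ0] at hya
  have hx : y / dg ∈ Icc 0 (min a c) :=
    ⟨by positivity, le_min ((div_le_iff₀ hdg0).2 (by nlinarith)) ((div_le_iff₀ hdg0).2 hyc.le)⟩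
  have hxa : dψ * (y / dg) ∈ Icc 0 a := by
    refine ⟨by positivity, ?_⟩
    rw [mul_div_assoc', div_le_iff₀ hdg0]
    linarith [mul_comm y dψ]
  calc ψ y = ψ (dg * (y / dg)) := by field_simp
    _ = g (dψ * (y / dg)) := hconj _ hx
    _ = dg * (dψ * (y / dg)) := hga _ hxa
    _ = dψ * y := by field_simp

theorem not_differentiableAt_mul_div
    (hconj : ∀ x ∈ Icc 0 (min a c), ψ (dg * x) = g (dψ * x))
    (ha : 0 < a) (hdg : 1 < dg) (hgt : dg < dψ) (hbc : a * dg / dψ ≤ c)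
    (hnd : ¬DifferentiableAt ℝ g a) : ¬DifferentiableAt ℝ ψ (a * dg / dψ) := by
  intro hψb
  have hdψ0 : 0 < dψ := by linarith
  rw [div_le_iff₀ hdψ0] at hbc
  have hcomp : DifferentiableAt ℝ (fun y => ψ (dg / dψ * y)) a := by
    rw [show a * dg / dψ = dg / dψ * a by ring] at hψb
    exact hψb.comp a (hasDerivAt_const_mul _).differentiableAt
  refine hnd (hcomp.congr_of_eventuallyEq ?_)
  filter_upwards [eventually_gt_nhds ha, eventually_lt_nhds (lt_mul_right ha (hdg.trans hgt)),
    eventually_lt_nhds (show a < c * dψ by nlinarith)] with y hy0 hya hyc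
  have hx : y / dψ ∈ Icc 0 (min a c) :=
    ⟨by positivity, le_min ((div_le_iff₀ hdψ0).2 hya.le) ((div_le_iff₀ hdψ0).2 hyc.le)⟩
  calc g y = g (dψ * (y / dψ)) := by field_simp
    _ = ψ (dg * (y / dψ)) := (hconj _ hx).symm
    _ = ψ (dg / dψ * y) := by ring_nf

end LinearNearZero

/-- Let `a` be the smallest positive kink of a carcass map `g` whose
complete pre-image of `0` is dense in `[0,1]`, and `ψ` a piecewise linear
self-semiconjugation of `g`. If `ψ'(0) > g'(0)` (right derivatives), then
`a·g'(0)/ψ'(0)` is the smallest positive kink of `ψ`. -/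
theorem first_kink_of_selfSemiconj (g ψ : ℝ → ℝ) (hg : IsCarcass g)
    (hdense : Icc (0:ℝ) 1 ⊆ closure (completePreimZero g))
    (a : ℝ) (ha : a ∈ Ioo (0:ℝ) 1) (haKink : IsKink g a)
    (haMin : ∀ y, IsKink g y → a ≤ y)
    (hψ : IsSelfSemiconj g ψ) (hψpl : IsPLOn ψ 0 1)
    (dg dψ : ℝ) (hdg : HasDerivWithinAt g dg (Ioi 0) 0)
    (hdψ : HasDerivWithinAt ψ dψ (Ioi 0) 0) (hgt : dψ > dg) :
    IsKink ψ (a * dg / dψ) ∧ ∀ y, IsKink ψ y → a * dg / dψ ≤ y := by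
  obtain ⟨hgu, hgpl⟩ := hg
  have hga : ∀ x ∈ Icc 0 a, g x = dg * x := fun x hx => by
    simpa [hgu.apply_zero] using hgpl.eq_of_forall_kink_le hdg ha.2.le haMin x hx
  have hdg1 : 1 < dg := hgu.one_lt_of_dense_of_eq_mul hdense ha hga
  obtain ⟨c, hc, hψc⟩ := hψpl.exists_isLeast_kink hψ.2.1 hdψ (hdg1.trans hgt)
  have hψ0 : ψ 0 = 0 :=
    hψ.apply_zero_eq_zero hgu hdense ha hga hdg1 hc.1.1.1 hψc (by linarith)
  have hconj := apply_mul_eq_apply_mul_of_commute hψ.2.2.2 ha.2.le hga fun x hx => by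
    simpa [hψ0] using hψc x hx
  have hbc : a * dg / dψ ≤ c :=
    mul_div_le_of_not_differentiableAt hconj hga hc.1.1.1 hdg1 hgt hc.1.2
  have hb0 : 0 < a * dg / dψ := div_pos (mul_pos ha.1 (by linarith)) (by linarith)
  exact ⟨⟨⟨hb0, hbc.trans_lt hc.1.1.2⟩,
    not_differentiableAt_mul_div hconj ha.1 hdg1 hgt hbc haKink.2⟩, fun y hy => hbc.trans (hc.2 hy)⟩
end
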